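/- arXiv:2010.08613 — 6 statements merged into one kernel-verified Lean document; each statement's English description precedes it below -/
import Mathlib

section
/- Let T be a Galton-Watson tree with offspring distribution p₀ = 1/2, p₁ = 0, p₂ = 1/2 (full binary critical GW tree). Then for every x ∈ ℕ, P{HS(T) = x} = 2^{-(x+1)}. -/
open scoped ENNReal

/-- Finite rooted ordered trees. -/
inductive RTree : Type where
  | node : List RTree → RTree

namespace RTree

/-- Number of nodes of a rooted tree. -/
def size : RTree → ℕ
  | node ts => 1 + (ts.attach.map (fun x => size x.1)).sum
decreasing_by simp only [RTree.node.sizeOf_spec]; have := List.sizeOf_lt_of_mem x.2; omega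

/-- The (standard) Horton-Strahler number: `0` at leaves; at an internal node, the
maximum of the children's values, plus one if the maximum is attained at least twice. -/
def HS : RTree → ℕ
  | node ts =>
    let vals := ts.attach.map (fun x => HS x.1)
    let m := vals.foldr max 0
    m + (if 2 ≤ (vals.filter (fun v => v == m)).length then 1 else 0)
decreasing_by simp only [RTree.node.sizeOf_spec]; have := List.sizeOf_lt_of_mem x.2; omega

/-- The French Horton-Strahler number: with children values sorted decreasingly as
`v₁ ≥ v₂ ≥ ⋯ ≥ v_k`, it equals `max_i (v_i + (i-1))`. -/
def Fr : RTree → ℕ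
  | node ts =>
    let vals := (ts.attach.map (fun x => Fr x.1)).mergeSort (fun a b => decide (b ≤ a))
    (vals.zipIdx.map (fun p => p.1 + p.2)).foldr max 0
decreasing_by simp only [RTree.node.sizeOf_spec]; have := List.sizeOf_lt_of_mem x.2; omega

/-- The Canadian Horton-Strahler number: `v₁ + (r - 1)` where `r` is the number of
children attaining the maximal value `v₁`. -/
def Can : RTree → ℕ
  | node ts =>
    let vals := ts.attach.map (fun x => Can x.1)
    let m := vals.foldr max 0
    if vals.length = 0 then 0
    else m + ((vals.filter (fun v => v == m)).length - 1)
decreasing_by simp only [RTree.node.sizeOf_spec]; have := List.sizeOf_lt_of_mem x.2; omega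

/-- The rigid Horton-Strahler number: max of children's values, plus one if the node has
at least two children and all children attain the maximum. -/
def Rig : RTree → ℕ
  | node ts =>
    let vals := ts.attach.map (fun x => Rig x.1)
    let m := vals.foldr max 0
    if vals.length ≤ 1 then m
    else m + (if vals.all (fun v => v == m) then 1 else 0)
decreasing_by simp only [RTree.node.sizeOf_spec]; have := List.sizeOf_lt_of_mem x.2; omega

/-- The `k`-ary register function: with children values sorted decreasingly as
`𝒦₁ ≥ ⋯ ≥ 𝒦_ℓ`, it equals `max {𝒦₁, 𝒦_k + 1}` if `ℓ ≥ k` and `𝒦₁` otherwise. -/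
def Kreg (k : ℕ) : RTree → ℕ
  | node ts =>
    let vals := (ts.attach.map (fun x => Kreg k x.1)).mergeSort (fun a b => decide (b ≤ a))
    if k ≤ vals.length then max (vals.headD 0) (vals.getD (k - 1) 0 + 1)
    else vals.headD 0
decreasing_by simp only [RTree.node.sizeOf_spec]; have := List.sizeOf_lt_of_mem x.2; omega

/-- The Galton-Watson weight of a finite tree: the product over all nodes of the
offspring probability of the node's number of children.  For an offspring distribution
`p` summing to one, `∑' t with property P, gwWeight p t` is the probability that the
(almost surely finite) Galton-Watson tree satisfies `P`. -/
noncomputable def gwWeight (p : ℕ → ℝ≥0∞) : RTree → ℝ≥0∞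
  | node ts => p ts.length * (ts.attach.map (fun x => gwWeight p x.1)).prod
decreasing_by simp only [RTree.node.sizeOf_spec]; have := List.sizeOf_lt_of_mem x.2; omega

/-- The preorder degree sequence of a tree. -/
def degSeq : RTree → List ℕ
  | node ts => ts.length :: (ts.attach.map (fun x => degSeq x.1)).flatten
decreasing_by simp only [RTree.node.sizeOf_spec]; have := List.sizeOf_lt_of_mem x.2; omega

/-- Maximal number of children of any node in the tree. -/
def maxDeg : RTree → ℕ
  | node ts => max ts.length ((ts.attach.map (fun x => maxDeg x.1)).foldr max 0)
decreasing_by simp only [RTree.node.sizeOf_spec]; have := List.sizeOf_lt_of_mem x.2; omega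

/-- `EmbedsCBT h T`: a complete binary tree of height `h` embeds (in the topological
minor sense) into `T`. -/
inductive EmbedsCBT : ℕ → RTree → Prop where
  | zero (t : RTree) : EmbedsCBT 0 t
  | child (h : ℕ) (ts : List RTree) (t : RTree) (ht : t ∈ ts) (he : EmbedsCBT h t) :
      EmbedsCBT h (.node ts)
  | split (h : ℕ) (ts : List RTree) (i j : Fin ts.length) (hij : i ≠ j)
      (hi : EmbedsCBT h ts[i]) (hj : EmbedsCBT h ts[j]) :
      EmbedsCBT (h + 1) (.node ts)

/-- `EmbedsCKT k h T`: a complete `k`-ary tree of height `h` embeds into `T`. -/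
inductive EmbedsCKT (k : ℕ) : ℕ → RTree → Prop where
  | zero (t : RTree) : EmbedsCKT k 0 t
  | child (h : ℕ) (ts : List RTree) (t : RTree) (ht : t ∈ ts) (he : EmbedsCKT k h t) :
      EmbedsCKT k h (.node ts)
  | split (h : ℕ) (ts : List RTree) (s : Finset (Fin ts.length)) (hcard : s.card = k)
      (hall : ∀ i ∈ s, EmbedsCKT k h ts[i]) :
      EmbedsCKT k (h + 1) (.node ts)

end RTree


/-!
A full binary Galton–Watson tree is a leaf with probability `1/2`, and otherwise a root with two
independent copies of the tree below it. Since `HS (node [a, b])` is `max (HS a) (HS b)`, plus one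
exactly when `HS a = HS b`, the masses `A x` of `{HS = x}` satisfy `A 0 = 1/2` and
`A (x+1) = A (x+1) * P{HS < x+1} + A x ^ 2 / 2`. By induction `P{HS < x+1} = 1 - 2^{-(x+1)}`,
and as the total mass is at most `1` the term `A (x+1) * P{HS < x+1}` can be cancelled, leaving
`A (x+1) * 2^{-(x+1)} = 2^{-2(x+1)} / 2`.
-/

open Finset

namespace RTree

theorem HS_leaf : HS (node []) = 0 := by
  simp [HS]

theorem HS_pair (a b : RTree) :
    HS (node [a, b]) = max (HS a) (HS b) + if HS a = HS b then 1 else 0 := by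
  rw [HS]
  simp only [List.attach_cons, List.map_cons, List.attach_nil, List.map_nil,
    List.foldr_cons, List.foldr_nil, Nat.max_zero]
  rcases lt_trichotomy (HS a) (HS b) with h | h | h
  · simp [Nat.max_eq_right h.le, h.ne]
  · simp [h]
  · simp [Nat.max_eq_left h.le, h.ne', h.ne]

theorem one_le_size (t : RTree) : 1 ≤ size t := by
  cases t
  rw [size]
  omega

theorem size_pair (a b : RTree) : size (node [a, b]) = 1 + size a + size b := by
  simp [size, List.attach_cons]
  omega

def nodeEquiv : List RTree ≃ RTree where
  toFun := node
  invFun | node ts => ts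
  left_inv _ := rfl
  right_inv | node _ => rfl

theorem tsum_eq_leaf_add_tsum_pair (F : RTree → ℝ≥0∞)
    (hF : ∀ ts : List RTree, ts.length ≠ 0 → ts.length ≠ 2 → F (node ts) = 0) :
    ∑' t, F t = F (node []) + ∑' (a) (b), F (node [a, b]) := by
  rw [← nodeEquiv.tsum_eq F, ENNReal.tsum_eq_add_tsum_ite []]
  congr 1
  have pair_injective : Function.Injective (fun q : RTree × RTree => [q.1, q.2]) := by
    intro q r h
    simp only [List.cons.injEq, and_true] at h
    exact Prod.ext h.1 h.2
  rw [← pair_injective.tsum_eq, ENNReal.tsum_prod']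
  · simp [nodeEquiv]
  · intro ts hts
    simp only [Function.mem_support, ne_eq, ite_eq_left_iff, not_forall] at hts
    obtain ⟨hne, hFts⟩ := hts
    have h2 : ts.length = 2 := by
      by_contra h2
      exact hFts (hF ts (by simpa using hne) h2)
    match ts, h2 with
    | [a, b], _ => exact ⟨(a, b), rfl⟩

section gwWeight

variable (p : ℕ → ℝ≥0∞)

theorem gwWeight_leaf : gwWeight p (node []) = p 0 := by
  simp [gwWeight]

theorem gwWeight_pair (a b : RTree) :
    gwWeight p (node [a, b]) = p 2 * (gwWeight p a * gwWeight p b) := by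
  rw [gwWeight]
  simp [List.attach_cons]

theorem gwWeight_node_eq_zero {ts : List RTree} (h : p ts.length = 0) :
    gwWeight p (node ts) = 0 := by
  rw [gwWeight, h, zero_mul]

variable {p}

theorem tsum_ite_gwWeight_of_binary (hp : ∀ n, n ≠ 0 → n ≠ 2 → p n = 0)
    (P : RTree → Prop) [DecidablePred P] :
    ∑' t, (if P t then gwWeight p t else 0) =
      (if P (node []) then p 0 else 0) +
        ∑' (a) (b), if P (node [a, b]) then p 2 * (gwWeight p a * gwWeight p b) else 0 := by
  rw [tsum_eq_leaf_add_tsum_pair _ fun ts h0 h2 => by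
    rw [gwWeight_node_eq_zero p (hp _ h0 h2), ite_self]]
  simp only [gwWeight_leaf, gwWeight_pair]

theorem tsum_gwWeight_of_size_le_le_one (hp : ∀ n, n ≠ 0 → n ≠ 2 → p n = 0)
    (hp1 : p 0 + p 2 ≤ 1) (n : ℕ) :
    ∑' t, (if size t ≤ n then gwWeight p t else 0) ≤ 1 := by
  induction n with
  | zero =>
    simp [Nat.one_le_iff_ne_zero.mp (one_le_size _)]
  | succ n ih =>
    set T := ∑' t, (if size t ≤ n then gwWeight p t else 0)
    have pair_le (a b : RTree) :
        (if size (node [a, b]) ≤ n + 1 then p 2 * (gwWeight p a * gwWeight p b) else 0) ≤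
          p 2 * ((if size a ≤ n then gwWeight p a else 0) *
            (if size b ≤ n then gwWeight p b else 0)) := by
      rw [size_pair]
      have := one_le_size a
      have := one_le_size b
      split_ifs <;> first | exact le_rfl | exact zero_le | omega
    rw [tsum_ite_gwWeight_of_binary hp]
    calc _ ≤ p 0 + p 2 * (T * T) := by
          gcongr
          · split_ifs <;> simp
          · calc _ ≤ _ := ENNReal.tsum_le_tsum fun a => ENNReal.tsum_le_tsum (pair_le a)
              _ = p 2 * (T * T) := by
                simp only [T, ENNReal.tsum_mul_left, ENNReal.tsum_mul_right]
      _ ≤ p 0 + p 2 * (1 * 1) := by gcongr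
      _ ≤ 1 := by simpa using hp1

theorem tsum_gwWeight_le_one (hp : ∀ n, n ≠ 0 → n ≠ 2 → p n = 0) (hp1 : p 0 + p 2 ≤ 1) :
    ∑' t, gwWeight p t ≤ 1 := by
  refine ENNReal.tsum_eq_iSup_sum ▸ iSup_le fun s => ?_
  calc ∑ t ∈ s, gwWeight p t = ∑ t ∈ s, if size t ≤ s.sup size then gwWeight p t else 0 :=
        sum_congr rfl fun t ht => (if_pos (le_sup ht)).symm
    _ ≤ ∑' t, if size t ≤ s.sup size then gwWeight p t else 0 := ENNReal.sum_le_tsum s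
    _ ≤ 1 := tsum_gwWeight_of_size_le_le_one hp hp1 _

end gwWeight

section HortonStrahlerLaw

variable (p : ℕ → ℝ≥0∞)

noncomputable def probHSEq (x : ℕ) : ℝ≥0∞ :=
  ∑' t, if HS t = x then gwWeight p t else 0

noncomputable def probHSLt (x : ℕ) : ℝ≥0∞ :=
  ∑' t, if HS t < x then gwWeight p t else 0

theorem probHSLt_eq_sum (x : ℕ) : probHSLt p x = ∑ y ∈ range x, probHSEq p y := by
  have ite_lt (t : RTree) : (if HS t < x then gwWeight p t else 0) =
      ∑ y ∈ range x, if HS t = y then gwWeight p t else 0 := by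
    simp [mem_range]
  simp only [probHSLt, probHSEq, ite_lt]
  exact Summable.tsum_finsetSum fun _ _ => ENNReal.summable

variable {p}

theorem probHSEq_zero (hp : ∀ n, n ≠ 0 → n ≠ 2 → p n = 0) : probHSEq p 0 = p 0 := by
  have HS_pair_ne_zero (a b : RTree) : HS (node [a, b]) ≠ 0 := by
    rw [HS_pair]
    split_ifs <;> omega
  simp [probHSEq, tsum_ite_gwWeight_of_binary hp, HS_leaf, HS_pair_ne_zero]

/-- A pair has Horton–Strahler number `y + 1` iff one child has `y + 1` and the other less, or
both children have `y`. -/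
theorem probHSEq_succ (hp : ∀ n, n ≠ 0 → n ≠ 2 → p n = 0) (y : ℕ) :
    probHSEq p (y + 1) =
      p 2 * (probHSEq p (y + 1) * probHSLt p (y + 1)) +
        p 2 * (probHSLt p (y + 1) * probHSEq p (y + 1)) +
          p 2 * (probHSEq p y * probHSEq p y) := by
  have ite_pair (a b : RTree) :
      (if HS (node [a, b]) = y + 1 then p 2 * (gwWeight p a * gwWeight p b) else 0) =
        p 2 * ((if HS a = y + 1 then gwWeight p a else 0) *
          (if HS b < y + 1 then gwWeight p b else 0)) +
        p 2 * ((if HS a < y + 1 then gwWeight p a else 0) *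
          (if HS b = y + 1 then gwWeight p b else 0)) +
        p 2 * ((if HS a = y then gwWeight p a else 0) * (if HS b = y then gwWeight p b else 0)) := by
    rw [HS_pair]
    rcases lt_trichotomy (HS a) (HS b) with h | h | h
    · rw [Nat.max_eq_right h.le, if_neg h.ne]
      split_ifs <;> first | omega | simp
    · rw [h, Nat.max_self, if_pos rfl]
      split_ifs <;> first | omega | simp
    · rw [Nat.max_eq_left h.le, if_neg h.ne']
      split_ifs <;> first | omega | simp
  conv_lhs => rw [probHSEq, tsum_ite_gwWeight_of_binary hp]
  simp only [HS_leaf, Nat.zero_ne_add_one, if_false, zero_add, ite_pair, ENNReal.tsum_add,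
    ENNReal.tsum_mul_left, ENNReal.tsum_mul_right]
  rfl

end HortonStrahlerLaw

theorem sum_range_half_pow_add_half_pow (x : ℕ) :
    ∑ y ∈ range x, (1 / 2 : ℝ≥0∞) ^ (y + 1) + (1 / 2) ^ x = 1 := by
  induction x with
  | zero => simp
  | succ n ih =>
    rw [sum_range_succ, add_assoc, pow_succ, ← mul_add, ENNReal.add_halves, mul_one, ih]

noncomputable def criticalBinary (n : ℕ) : ℝ≥0∞ :=
  if n = 0 then 1 / 2 else if n = 2 then 1 / 2 else 0

theorem criticalBinary_eq_zero (n : ℕ) (h0 : n ≠ 0) (h2 : n ≠ 2) : criticalBinary n = 0 := by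
  simp [criticalBinary, h0, h2]

theorem probHSEq_criticalBinary (x : ℕ) : probHSEq criticalBinary x = (1 / 2) ^ (x + 1) := by
  induction x using Nat.strong_induction_on with | _ x ih
  rcases x with _ | y
  · simp [probHSEq_zero criticalBinary_eq_zero, criticalBinary]
  · set A := probHSEq criticalBinary (y + 1)
    set q : ℝ≥0∞ := (1 / 2) ^ (y + 1)
    have hB : probHSLt criticalBinary (y + 1) + q = 1 := by
      rw [probHSLt_eq_sum, sum_congr rfl fun z hz => ih z (mem_range.mp hz)]
      exact sum_range_half_pow_add_half_pow _
    have mass_le_one (P : RTree → Prop) [DecidablePred P] :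
        ∑' t, (if P t then gwWeight criticalBinary t else 0) ≤ 1 :=
      (ENNReal.tsum_le_tsum fun t => by split_ifs <;> simp).trans
        (tsum_gwWeight_le_one criticalBinary_eq_zero (ENNReal.add_halves 1).le)
    have hA_ne_top : A * probHSLt criticalBinary (y + 1) ≠ ⊤ :=
      ne_top_of_le_ne_top ENNReal.one_ne_top (mul_le_one' (mass_le_one _) (mass_le_one _))
    have hrec := probHSEq_succ criticalBinary_eq_zero y
    simp only [criticalBinary, OfNat.ofNat_ne_zero, if_false, if_true, ih y y.lt_succ_self] at hrec
    rw [mul_comm (probHSLt _ _) A, ← add_mul, ENNReal.add_halves, one_mul] at hrec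
    have hAq : A * q = 1 / 2 * q * q := by
      rw [← ENNReal.add_right_inj hA_ne_top, ← mul_add, hB, mul_one, mul_assoc]
      exact hrec
    rw [ENNReal.mul_left_inj (by simp [q]) (by simp [q])] at hAq
    rw [hAq, pow_succ _ (y + 1), mul_comm]

end RTree

/-- For a Galton-Watson tree with offspring distribution
`p₀ = 1/2, p₁ = 0, p₂ = 1/2`, for every `x ∈ ℕ`, `P{HS(T) = x} = 2^{-(x+1)}`. -/
theorem hs_full_binary_gw (x : ℕ) :
    (∑' t : RTree, if RTree.HS t = x then
        RTree.gwWeight (fun n => if n = 0 then (1/2 : ℝ≥0∞) else if n = 2 then 1/2 else 0) t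
      else 0) = (1/2 : ℝ≥0∞) ^ (x + 1) :=
  RTree.probHSEq_criticalBinary x
end

section
/- If a sequence q : ℕ → ℝ of nonnegative reals with q_i ≤ q_{i-1}²/(2 q_i⁺) for all i ≥ 1, where q_i⁺ = Σ_{k≥i} q_k (assumed positive and finite), then q_i is monotonically decreasing and q_i ≤ q₀ / 2^{i/2} for all i ≥ 0. -/
open scoped ENNReal

/-! Since `q_i ≤ q_i⁺`, the hypothesis gives `2 q_i² ≤ 2 q_i q_i⁺ ≤ q_{i-1}²`, i.e.
`q_i ≤ q_{i-1} / √2`. Monotonicity is immediate, and iterating gives `2^i q_i² ≤ q_0²`. -/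

lemma le_tsum_nat_add {f : ℕ → ℝ} (hf : ∀ i, 0 ≤ f i) (hsum : Summable f) (i : ℕ) :
    f i ≤ ∑' k, f (i + k) := by
  have htail : Summable fun k => f (i + k) := by
    simpa only [add_comm] using (summable_nat_add_iff i).2 hsum
  simpa using htail.le_tsum 0 fun k _ => hf (i + k)

lemma two_mul_sq_le_sq_of_le_sq_div {a b T : ℝ} (ha : 0 ≤ a) (haT : a ≤ T) (hT : 0 < T)
    (h : a ≤ b ^ 2 / (2 * T)) : 2 * a ^ 2 ≤ b ^ 2 :=
  calc 2 * a ^ 2 = a * (2 * a) := by ring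
    _ ≤ a * (2 * T) := by gcongr
    _ ≤ b ^ 2 := (le_div_iff₀ (by positivity)).1 h

section SquareHalving

variable {q : ℕ → ℝ}

lemma antitone_of_two_mul_sq_succ_le (hq : ∀ i, 0 ≤ q i)
    (hhalf : ∀ i, 2 * q (i + 1) ^ 2 ≤ q i ^ 2) : Antitone q :=
  antitone_nat_of_succ_le fun i =>
    (pow_le_pow_iff_left₀ (hq _) (hq _) two_ne_zero).1
      (by linarith [hhalf i, sq_nonneg (q (i + 1))])

lemma sq_mul_two_pow_le_of_two_mul_sq_succ_le (hhalf : ∀ i, 2 * q (i + 1) ^ 2 ≤ q i ^ 2)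
    (i : ℕ) : q i ^ 2 * 2 ^ i ≤ q 0 ^ 2 := by
  induction i with
  | zero => simp
  | succ n ih =>
    calc q (n + 1) ^ 2 * 2 ^ (n + 1) = 2 * q (n + 1) ^ 2 * 2 ^ n := by ring
      _ ≤ q n ^ 2 * 2 ^ n := by gcongr; exact hhalf n
      _ ≤ q 0 ^ 2 := ih

lemma le_div_two_rpow_half_of_two_mul_sq_succ_le (hq : ∀ i, 0 ≤ q i)
    (hhalf : ∀ i, 2 * q (i + 1) ^ 2 ≤ q i ^ 2) (i : ℕ) :
    q i ≤ q 0 / (2 : ℝ) ^ ((i : ℝ) / 2) := by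
  have hsq : ((2 : ℝ) ^ ((i : ℝ) / 2)) ^ 2 = 2 ^ i := by
    rw [← Real.rpow_mul_natCast zero_le_two]
    norm_num
  rw [le_div_iff₀ (by positivity)]
  refine le_of_pow_le_pow_left₀ two_ne_zero (hq 0) ?_
  rw [mul_pow, hsq]
  exact sq_mul_two_pow_le_of_two_mul_sq_succ_le hhalf i

end SquareHalving

/-- A nonnegative sequence with `q_i ≤ q_{i-1}²/(2 q_i⁺)` for `i ≥ 1`
(with `q_i⁺ = Σ_{k ≥ i} q_k` positive and finite) is monotonically decreasing and
satisfies `q_i ≤ q₀/2^{i/2}`. -/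
theorem hs_tail_decay_abstract (q : ℕ → ℝ) (hq : ∀ i, 0 ≤ q i) (hsum : Summable q)
    (hpos : ∀ i, 0 < ∑' k, q (i + k))
    (hrec : ∀ i, 1 ≤ i → q i ≤ (q (i - 1)) ^ 2 / (2 * ∑' k, q (i + k))) :
    Antitone q ∧ ∀ i : ℕ, q i ≤ q 0 / (2 : ℝ) ^ ((i : ℝ) / 2) := by
  have hhalf : ∀ i, 2 * q (i + 1) ^ 2 ≤ q i ^ 2 := fun i =>
    two_mul_sq_le_sq_of_le_sq_div (hq _) (le_tsum_nat_add hq hsum _) (hpos _)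
      (hrec (i + 1) (Nat.le_add_left 1 i))
  exact ⟨antitone_of_two_mul_sq_succ_le hq hhalf,
    le_div_two_rpow_half_of_two_mul_sq_succ_le hq hhalf⟩
end

section
/- For any rooted tree T, the four Horton-Strahler variants are ordered: Fr(T) ≥ Can(T) ≥ HS(T) ≥ Rig(T). -/
open scoped ENNReal

/-!
The four values are computed at each node from the children's values, and the three
inequalities are proved together by induction, so at a node the children's values of the
smaller variant are dominated pointwise by those of the larger one. Let `m` be the largest
child value on the smaller side and `r` the number of children attaining it. Domination
leaves at least `r` children of value `≥ m` on the larger side. For `Can ≤ Fr`, sorting puts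
them in the first `r` positions, so `Fr ≥ m + (r - 1)`. For `HS ≤ Can` and `Rig ≤ HS`, either
the maximum grows strictly, which pays for the `+1`, or it stays `m`, and then the maximal
children on the larger side are at least as many (for `Rig`: all of them).
-/

namespace List

theorem foldr_max_zero_mem {l : List ℕ} (h : l ≠ []) : l.foldr max 0 ∈ l :=
  maximum_mem (foldr_max_of_ne_nil (α := ℕ) h).symm

theorem le_foldr_max_zero {l : List ℕ} {x : ℕ} (hx : x ∈ l) : x ≤ l.foldr max 0 :=
  le_max_of_le hx le_rfl

theorem Forall₂.foldr_max_le {a b : List ℕ} (h : Forall₂ (· ≤ ·) a b) :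
    a.foldr max 0 ≤ b.foldr max 0 := by
  induction h with
  | nil => rfl
  | cons hxy _ ih => exact max_le_max hxy ih

theorem Forall₂.countP_le {α β : Type*} {R : α → β → Prop} {p : α → Bool} {q : β → Bool}
    {a : List α} {b : List β} (h : Forall₂ R a b) (hpq : ∀ x y, R x y → p x → q y) :
    a.countP p ≤ b.countP q := by
  induction h with
  | nil => rfl
  | @cons x y _ _ hxy _ ih =>
    have := hpq x y hxy
    grind

theorem forall₂_map_map_iff {α β γ : Type*} {R : α → β → Prop} {f : γ → α} {g : γ → β}
    {l : List γ} : Forall₂ R (l.map f) (l.map g) ↔ ∀ x ∈ l, R (f x) (g x) := by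
  rw [forall₂_map_left_iff, forall₂_map_right_iff, forall₂_same]

theorem beq_foldr_max_zero {l : List ℕ} {v : ℕ} (hv : v ∈ l) :
    (v == l.foldr max 0) = decide (l.foldr max 0 ≤ v) := by
  have := le_foldr_max_zero hv
  by_cases h : l.foldr max 0 ≤ v <;> simp [h] <;> omega

theorem filter_beq_foldr_max_length (l : List ℕ) :
    (l.filter (· == l.foldr max 0)).length = l.countP (l.foldr max 0 ≤ ·) := by
  rw [← countP_eq_length_filter]
  exact countP_congr fun v hv => by simp [beq_foldr_max_zero hv]

theorem all_beq_foldr_max_iff (l : List ℕ) :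
    l.all (· == l.foldr max 0) ↔ l.countP (l.foldr max 0 ≤ ·) = l.length := by
  rw [all_eq_true, countP_eq_length]
  exact forall₂_congr fun v hv => by simp [beq_foldr_max_zero hv]

theorem countP_foldr_max_pos {l : List ℕ} (hl : l ≠ []) : 0 < l.countP (l.foldr max 0 ≤ ·) :=
  countP_pos_iff.2 ⟨_, foldr_max_zero_mem hl, by simp⟩

theorem le_getElem_of_lt_countP {s : List ℕ} (hs : s.Pairwise (· ≥ ·)) {m r : ℕ}
    (hr : r < s.countP (m ≤ ·)) : m ≤ s[r]'(hr.trans_le countP_le_length) := by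
  have hrs : r < s.length := hr.trans_le countP_le_length
  by_contra! hlt
  -- then every entry from position `r` on is `< m`, so only the first `r` entries count
  have hdrop : (s.drop r).countP (m ≤ ·) = 0 := by
    rw [countP_eq_zero]
    intro x hx
    have hsr := hs.drop (i := r)
    rw [drop_eq_getElem_cons hrs] at hx hsr
    have hxr : x ≤ s[r] := by
      rcases mem_cons.1 hx with rfl | hx
      · rfl
      · exact (pairwise_cons.1 hsr).1 x hx
    simpa using hxr.trans_lt hlt
  have htake : (s.take r).countP (m ≤ ·) ≤ r :=
    countP_le_length.trans (length_take_le _ _)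
  rw [← take_append_drop r s, countP_append] at hr
  omega

end List

open List

namespace RTree

@[induction_eliminator]
theorem induction {motive : RTree → Prop}
    (node : ∀ ts, (∀ t ∈ ts, motive t) → motive (.node ts)) (T : RTree) : motive T :=
  RTree.rec (motive_2 := fun ts => ∀ t ∈ ts, motive t) node (by simp) (by simp_all) T

def frStep (vals : List ℕ) : ℕ :=
  ((vals.mergeSort (fun a b => decide (b ≤ a))).zipIdx.map (fun p => p.1 + p.2)).foldr max 0

def canStep (vals : List ℕ) : ℕ :=
  if vals.length = 0 then 0
  else vals.foldr max 0 + ((vals.filter (· == vals.foldr max 0)).length - 1)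

def hsStep (vals : List ℕ) : ℕ :=
  vals.foldr max 0 + (if 2 ≤ (vals.filter (· == vals.foldr max 0)).length then 1 else 0)

def rigStep (vals : List ℕ) : ℕ :=
  if vals.length ≤ 1 then vals.foldr max 0
  else vals.foldr max 0 + (if vals.all (· == vals.foldr max 0) then 1 else 0)

theorem Fr_node (ts : List RTree) : Fr (node ts) = frStep (ts.map Fr) := by
  rw [Fr, attach_map_val]; rfl

theorem Can_node (ts : List RTree) : Can (node ts) = canStep (ts.map Can) := by
  rw [Can, attach_map_val]; rfl

theorem HS_node (ts : List RTree) : HS (node ts) = hsStep (ts.map HS) := by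
  rw [HS, attach_map_val]; rfl

theorem Rig_node (ts : List RTree) : Rig (node ts) = rigStep (ts.map Rig) := by
  rw [Rig, attach_map_val]; rfl

theorem le_frStep {b : List ℕ} {m r : ℕ} (hr : r < b.countP (m ≤ ·)) : m + r ≤ frStep b := by
  set s := b.mergeSort (fun a b => decide (b ≤ a))
  have hrs : r < s.countP (m ≤ ·) := by rwa [(mergeSort_perm b _).countP_eq]
  have hsr : m ≤ s[r]'(hrs.trans_le countP_le_length) :=
    le_getElem_of_lt_countP (pairwise_mergeSort' (· ≥ ·) b) hrs
  refine (Nat.add_le_add_right hsr r).trans (le_foldr_max_zero (mem_map.2 ⟨(_, r), ?_, rfl⟩))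
  exact mem_zipIdx_iff_getElem?.2 (getElem?_eq_getElem _)

section Domination

variable {a b : List ℕ}

theorem countP_foldr_max_le_of_eq (h : Forall₂ (· ≤ ·) a b)
    (heq : a.foldr max 0 = b.foldr max 0) :
    a.countP (a.foldr max 0 ≤ ·) ≤ b.countP (b.foldr max 0 ≤ ·) :=
  h.countP_le fun x y hxy hx => by simp_all; omega

theorem canStep_le_frStep (h : Forall₂ (· ≤ ·) a b) : canStep a ≤ frStep b := by
  unfold canStep
  split_ifs with ha
  · exact Nat.zero_le _
  rw [filter_beq_foldr_max_length]
  have hpos := countP_foldr_max_pos (ne_nil_of_length_pos (Nat.pos_of_ne_zero ha))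
  have hab : a.countP (a.foldr max 0 ≤ ·) ≤ b.countP (a.foldr max 0 ≤ ·) :=
    h.countP_le fun x y hxy hx => by simp_all; omega
  exact le_frStep (by omega)

theorem hsStep_le_canStep (h : Forall₂ (· ≤ ·) a b) : hsStep a ≤ canStep b := by
  rcases eq_or_ne b [] with rfl | hb
  · rw [forall₂_nil_right_iff.1 h]; rfl
  unfold hsStep canStep
  rw [filter_beq_foldr_max_length, filter_beq_foldr_max_length]
  have hb0 : b.length ≠ 0 := by simpa using hb
  have hm := h.foldr_max_le
  have hc := countP_foldr_max_le_of_eq h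
  have hpos := countP_foldr_max_pos hb
  split_ifs <;> omega

theorem rigStep_le_hsStep (h : Forall₂ (· ≤ ·) a b) : rigStep a ≤ hsStep b := by
  unfold rigStep hsStep
  rw [filter_beq_foldr_max_length]
  simp only [all_beq_foldr_max_iff]
  have hm := h.foldr_max_le
  have hc := countP_foldr_max_le_of_eq h
  have hlen := h.length_eq
  have hb : b.countP (b.foldr max 0 ≤ ·) ≤ b.length := countP_le_length
  split_ifs <;> omega

end Domination

end RTree

/-- For any rooted tree `T`, `Fr(T) ≥ Can(T) ≥ HS(T) ≥ Rig(T)`. -/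
theorem hs_variants_ordered (T : RTree) :
    T.Can ≤ T.Fr ∧ T.HS ≤ T.Can ∧ T.Rig ≤ T.HS := by
  induction T with
  | node ts ih =>
    rw [RTree.Fr_node, RTree.Can_node, RTree.HS_node, RTree.Rig_node]
    exact ⟨RTree.canStep_le_frStep (forall₂_map_map_iff.2 fun t ht => (ih t ht).1),
      RTree.hsStep_le_canStep (forall₂_map_map_iff.2 fun t ht => (ih t ht).2.1),
      RTree.rigStep_le_hsStep (forall₂_map_map_iff.2 fun t ht => (ih t ht).2.2)⟩
end

section
/- The Horton-Strahler number of a rooted tree T equals the height of the largest complete binary tree that admits a (topological-minor style) embedding into T. -/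
open scoped ENNReal

/-! Both inequalities are inductions over the tree. The Horton-Strahler number of a node
exceeds the maximum `m` of its children's values exactly when `m` is attained at two distinct
children, and that is exactly where a complete binary tree of height `m + 1` can branch;
otherwise one descends into a child attaining `m`. -/

theorem List.foldr_max_mem_cons {α : Type*} [LinearOrder α] (l : List α) (a : α) :
    l.foldr max a ∈ a :: l := by
  induction l with
  | nil => simp
  | cons b l ih =>
    rcases max_choice b (l.foldr max a) with h | h <;> rw [List.foldr_cons, h]
    · simp
    · simp only [List.mem_cons] at ih ⊢
      tauto

theorem List.two_le_count_map_iff {α β : Type*} [DecidableEq β] {f : α → β} {l : List α}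
    {b : β} : 2 ≤ (l.map f).count b ↔ ∃ i j : Fin l.length, i ≠ j ∧ f l[i] = b ∧ f l[j] = b := by
  rw [← List.duplicate_iff_two_le_count, List.duplicate_iff_exists_distinct_get]
  constructor
  · rintro ⟨i, j, hij, hi, hj⟩
    refine ⟨i.cast (by simp), j.cast (by simp), fun h => hij.ne (Fin.ext ?_), ?_, ?_⟩
    · simpa using congrArg Fin.val h
    · simpa using hi.symm
    · simpa using hj.symm
  · rintro ⟨i, j, hij, hi, hj⟩
    rcases Fin.lt_or_lt_of_ne hij with hlt | hlt
    · exact ⟨i.cast (by simp), j.cast (by simp), hlt, by simpa using hi.symm, by simpa using hj.symm⟩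
    · exact ⟨j.cast (by simp), i.cast (by simp), hlt, by simpa using hj.symm, by simpa using hi.symm⟩

namespace RTree

theorem induction_on_children {P : RTree → Prop} (step : ∀ ts, (∀ t ∈ ts, P t) → P (node ts)) :
    ∀ T, P T
  | node ts => step ts fun t _ => induction_on_children step t

theorem hs_node (ts : List RTree) :
    HS (node ts) = (ts.map HS).foldr max 0 +
      if 2 ≤ (ts.map HS).count ((ts.map HS).foldr max 0) then 1 else 0 := by
  rw [HS, List.attach_map_val, List.count_eq_length_filter]

theorem hs_le_hs_node {ts : List RTree} {t : RTree} (ht : t ∈ ts) : HS t ≤ HS (node ts) := by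
  rw [hs_node]
  exact le_add_right (List.le_max_of_le' 0 (List.mem_map_of_mem ht) le_rfl)

theorem lt_hs_node {ts : List RTree} {i j : Fin ts.length} (hij : i ≠ j) {h : ℕ}
    (hi : h ≤ HS ts[i]) (hj : h ≤ HS ts[j]) : h < HS (node ts) := by
  rw [hs_node]
  set m := (ts.map HS).foldr max 0
  have hle : ∀ k : Fin ts.length, HS ts[k] ≤ m := fun k =>
    List.le_max_of_le' 0 (List.mem_map_of_mem (List.getElem_mem _)) le_rfl
  rcases (hi.trans (hle i)).lt_or_eq with hlt | rfl
  · omega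
  · have hcount : 2 ≤ (ts.map HS).count m :=
      List.two_le_count_map_iff.2 ⟨i, j, hij, (hle i).antisymm hi, (hle j).antisymm hj⟩
    simp [hcount]

theorem embedsCBT_hs (T : RTree) : EmbedsCBT T.HS T := by
  induction T using induction_on_children with
  | step ts ih =>
    rw [hs_node]
    split_ifs with hcount
    · obtain ⟨i, j, hij, hi, hj⟩ := List.two_le_count_map_iff.1 hcount
      exact .split _ ts i j hij (hi ▸ ih _ (List.getElem_mem _)) (hj ▸ ih _ (List.getElem_mem _))
    · rw [add_zero]
      rcases List.mem_cons.1 (List.foldr_max_mem_cons (ts.map HS) 0) with h0 | hmem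
      · exact h0.symm ▸ .zero _
      · obtain ⟨t, ht, hm⟩ := List.mem_map.1 hmem
        exact hm ▸ .child _ ts t ht (ih t ht)

theorem le_hs_of_embedsCBT {h : ℕ} {T : RTree} (he : EmbedsCBT h T) : h ≤ T.HS := by
  induction he with
  | zero => exact Nat.zero_le _
  | child _ _ _ ht _ ih => exact ih.trans (hs_le_hs_node ht)
  | split _ _ _ _ hij _ _ ihi ihj => exact lt_hs_node hij ihi ihj

end RTree

/-- The Horton-Strahler number of a rooted tree `T` equals the height of
the largest complete binary tree that embeds into `T`. -/
theorem hs_eq_max_embedded_cbt (T : RTree) :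
    RTree.EmbedsCBT T.HS T ∧ ∀ h : ℕ, RTree.EmbedsCBT h T → h ≤ T.HS :=
  ⟨RTree.embedsCBT_hs T, fun _ => RTree.le_hs_of_embedsCBT⟩
end

section
/- Let ξ be an offspring distribution with mean 1 and variance σ² ∈ (0,∞) and p₁ = P{ξ = 1} < 1. Define ζ by P{ζ = 1} = 0 and P{ζ = i} = p_i/(1 - p₁) for i ≠ 1. Then the Horton-Strahler number of an unconditional ξ-Galton-Watson tree and that of an unconditional ζ-Galton-Watson tree have the same distribution. -/
/-! Contracting every node with exactly one child does not change the Horton-Strahler number.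
The trees contracting to a given tree `s` without unary nodes are obtained by inserting, above
each node of `s`, a path of `k ≥ 0` unary nodes. Summing the weights `p₁ ^ k` of these paths
gives a factor `∑ₖ p₁ ^ k = (1 - p₁)⁻¹` at every node of `s`, so the `ξ`-weight of the fibre over
`s` is the `ζ`-weight of `s`; both vanish when `s` has a unary node. -/

open scoped ENNReal

theorem ENNReal.tsum_list_map_preimage {α β : Type*} (f : α → β) (w : α → ℝ≥0∞) :
    ∀ bs : List β, ∑' as : List.map f ⁻¹' {bs}, (as.1.map w).prod =
      (bs.map fun b => ∑' a : f ⁻¹' {b}, w a).prod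
  | [] => by
    have : List.map f ⁻¹' {[]} = {[]} := by ext; simp
    rw [this]
    simp
  | b :: bs => by
    let cons : f ⁻¹' {b} × List.map f ⁻¹' {bs} → List.map f ⁻¹' {b :: bs} :=
      fun x => ⟨x.1.1 :: x.2.1,
        by simp [Set.mem_singleton_iff.mp x.1.2, Set.mem_singleton_iff.mp x.2.2]⟩
    have hcons : Function.Bijective cons := by
      refine ⟨fun x y hxy => ?_, fun ⟨as, has⟩ => ?_⟩
      · obtain ⟨h1, h2⟩ := List.cons.inj (congrArg Subtype.val hxy)
        exact Prod.ext (Subtype.ext h1) (Subtype.ext h2)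
      · cases as with
        | nil => exact absurd has (List.cons_ne_nil _ _).symm
        | cons a as =>
          obtain ⟨ha, has⟩ := List.cons.inj has
          exact ⟨(⟨a, ha⟩, ⟨as, has⟩), rfl⟩
    rw [← (Equiv.ofBijective cons hcons).tsum_eq]
    simp only [Equiv.ofBijective_apply, cons, List.map_cons, List.prod_cons]
    simp_rw [ENNReal.tsum_prod', ENNReal.tsum_mul_left, ENNReal.tsum_mul_right,
      ENNReal.tsum_list_map_preimage f w bs]

namespace RTree

theorem gwWeight_node (p : ℕ → ℝ≥0∞) (ts : List RTree) :
    gwWeight p (node ts) = p ts.length * (ts.map (gwWeight p)).prod := by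
  rw [gwWeight, List.attach_map_val]

theorem HS_node_congr {ts ts' : List RTree} (h : ts.map HS = ts'.map HS) :
    HS (node ts) = HS (node ts') := by
  simp only [HS, List.attach_map_val, h]

theorem HS_singleton (t : RTree) : HS (node [t]) = HS t := by
  simp [HS]

def contract : RTree → RTree
  | node ts =>
    if h : ts.length = 1 then contract (ts[0]'(by omega))
    else node (ts.attach.map fun x => contract x.1)
decreasing_by
  · simp only [RTree.node.sizeOf_spec]
    have := List.sizeOf_lt_of_mem (ts.getElem_mem (by omega : 0 < ts.length)); omega
  · simp only [RTree.node.sizeOf_spec]; have := List.sizeOf_lt_of_mem x.2; omega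

theorem contract_singleton (t : RTree) : contract (node [t]) = contract t := by
  rw [contract]; simp

theorem contract_node (ts : List RTree) (h : ts.length ≠ 1) :
    contract (node ts) = node (ts.map contract) := by
  rw [contract]; simp [h]

theorem HS_contract : ∀ t : RTree, HS (contract t) = HS t
  | node ts => by
    by_cases h : ts.length = 1
    · obtain ⟨a, rfl⟩ := List.length_eq_one_iff.mp h
      rw [contract_singleton, HS_contract a, HS_singleton]
    · rw [contract_node _ h]
      exact HS_node_congr (by simpa using List.map_congr_left fun a _ => HS_contract a)
decreasing_by
  · simp_all only [RTree.node.sizeOf_spec, List.cons.sizeOf_spec, List.nil.sizeOf_spec]; omega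
  · simp only [RTree.node.sizeOf_spec]; have := List.sizeOf_lt_of_mem ‹a ∈ ts›; omega

def chain : ℕ → RTree → RTree
  | 0, t => t
  | k + 1, t => node [chain k t]

theorem gwWeight_chain (p : ℕ → ℝ≥0∞) (k : ℕ) (t : RTree) :
    gwWeight p (chain k t) = p 1 ^ k * gwWeight p t := by
  induction k with
  | zero => simp [chain]
  | succ k ih => simp [chain, gwWeight_node, ih, pow_succ, mul_assoc, mul_comm]

theorem contract_chain (k : ℕ) (t : RTree) : contract (chain k t) = contract t := by
  induction k with
  | zero => rfl
  | succ k ih => rw [chain, contract_singleton, ih]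

theorem exists_chain_node_eq : ∀ t : RTree, ∃ k ts, ts.length ≠ 1 ∧ chain k (node ts) = t
  | node ts => by
    by_cases h : ts.length = 1
    · obtain ⟨a, rfl⟩ := List.length_eq_one_iff.mp h
      obtain ⟨k, us, hus, rfl⟩ := exists_chain_node_eq a
      exact ⟨k + 1, us, hus, rfl⟩
    · exact ⟨0, ts, h, rfl⟩
decreasing_by
  simp_all only [RTree.node.sizeOf_spec, List.cons.sizeOf_spec, List.nil.sizeOf_spec]; omega

theorem chain_node_inj {k k' : ℕ} {ts ts' : List RTree} (hts : ts.length ≠ 1)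
    (hts' : ts'.length ≠ 1) (h : chain k (node ts) = chain k' (node ts')) :
    k = k' ∧ ts = ts' := by
  induction k generalizing k' with
  | zero =>
    cases k' with
    | zero => exact ⟨rfl, node.inj h⟩
    | succ k' => exact absurd (congrArg List.length (node.inj h)) hts
  | succ k ih =>
    cases k' with
    | zero => exact absurd (congrArg List.length (node.inj h)).symm hts'
    | succ k' =>
      obtain ⟨rfl, rfl⟩ := ih (List.cons.inj (node.inj h)).1
      exact ⟨rfl, rfl⟩

theorem length_ne_one_of_contract_eq {t : RTree} {ss : List RTree} (h : contract t = node ss) :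
    ss.length ≠ 1 := by
  obtain ⟨k, ts, hts, rfl⟩ := exists_chain_node_eq t
  rw [contract_chain, contract_node _ hts, node.injEq] at h
  rwa [← h, List.length_map]

/-- The offspring law `ζ` of `ξ` conditioned to differ from `1`. -/
noncomputable def dropOne (p : ℕ → ℝ≥0∞) (i : ℕ) : ℝ≥0∞ :=
  if i = 1 then 0 else p i / (1 - p 1)

theorem tsum_gwWeight_contract_preimage (p : ℕ → ℝ≥0∞) :
    ∀ s : RTree, ∑' t : contract ⁻¹' {s}, gwWeight p t = gwWeight (dropOne p) s
  | node ss => by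
    by_cases hss : ss.length = 1
    · have : contract ⁻¹' {node ss} = ∅ :=
        Set.eq_empty_of_forall_notMem fun t ht => length_ne_one_of_contract_eq ht hss
      simp [this, gwWeight_node, hss, dropOne]
    have hlen (ts : List.map contract ⁻¹' {ss}) : ts.1.length = ss.length :=
      (List.length_map _).symm.trans (congrArg List.length (Set.mem_singleton_iff.mp ts.2))
    let chainNode : ℕ × List.map contract ⁻¹' {ss} → contract ⁻¹' {node ss} := fun x =>
      ⟨chain x.1 (node x.2), by
        rw [Set.mem_preimage, contract_chain, contract_node _ (hlen x.2 ▸ hss),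
          Set.mem_singleton_iff.mp x.2.2]
        exact Set.mem_singleton _⟩
    have hbij : Function.Bijective chainNode := by
      refine ⟨fun x y hxy => ?_, fun ⟨t, ht⟩ => ?_⟩
      · obtain ⟨h1, h2⟩ := chain_node_inj (hlen x.2 ▸ hss) (hlen y.2 ▸ hss)
          (congrArg Subtype.val hxy)
        exact Prod.ext h1 (Subtype.ext h2)
      · obtain ⟨k, ts, hts, rfl⟩ := exists_chain_node_eq t
        have hmap : ts.map contract = ss := by
          simpa [contract_chain, contract_node _ hts] using ht
        exact ⟨(k, ⟨ts, hmap⟩), rfl⟩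
    rw [← (Equiv.ofBijective chainNode hbij).tsum_eq]
    simp only [Equiv.ofBijective_apply, chainNode, gwWeight_chain, gwWeight_node, hlen]
    simp_rw [ENNReal.tsum_prod', ENNReal.tsum_mul_left, ENNReal.tsum_mul_right,
      ENNReal.tsum_geometric, ENNReal.tsum_list_map_preimage contract (gwWeight p) ss]
    rw [dropOne, if_neg hss, ENNReal.div_eq_inv_mul, mul_assoc]
    congr 3
    exact List.map_congr_left fun s _ => tsum_gwWeight_contract_preimage p s
decreasing_by simp only [RTree.node.sizeOf_spec]; have := List.sizeOf_lt_of_mem ‹s ∈ ss›; omega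

end RTree

theorem hs_remove_p1_general (p : ℕ → ℝ≥0∞) :
    ∀ x : ℕ,
      (∑' t : RTree, if RTree.HS t = x then RTree.gwWeight p t else 0) =
      ∑' t : RTree, if RTree.HS t = x then
          RTree.gwWeight (fun i => if i = 1 then 0 else p i / (1 - p 1)) t
        else 0 := by
  intro x
  rw [← ENNReal.tsum_fiberwise _ RTree.contract]
  refine tsum_congr fun s => ?_
  have hHS (t : RTree.contract ⁻¹' {s}) : RTree.HS t = RTree.HS s := by
    rw [← RTree.HS_contract, Set.mem_singleton_iff.mp t.2]
  simp only [hHS]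
  split_ifs
  · exact RTree.tsum_gwWeight_contract_preimage p s
  · exact tsum_zero

/-- Removing the probability of having exactly one child (and rescaling)
does not change the distribution of the Horton-Strahler number of an unconditional
critical Galton-Watson tree with variance in `(0, ∞)`. -/
theorem hs_remove_p1 (p : ℕ → ℝ≥0∞) (hsum : ∑' i : ℕ, p i = 1)
    (hmean : ∑' i : ℕ, (i : ℝ≥0∞) * p i = 1)
    (hvarpos : 1 < ∑' i : ℕ, (i : ℝ≥0∞) ^ 2 * p i)
    (hvarfin : ∑' i : ℕ, (i : ℝ≥0∞) ^ 2 * p i < ⊤)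
    (hp1 : p 1 < 1) :
    ∀ x : ℕ,
      (∑' t : RTree, if RTree.HS t = x then RTree.gwWeight p t else 0) =
      ∑' t : RTree, if RTree.HS t = x then
          RTree.gwWeight (fun i => if i = 1 then 0 else p i / (1 - p 1)) t
        else 0 :=
  hs_remove_p1_general p
end

section
/- Fix γ ∈ (0,1) and ε ∈ (0,1), and suppose a positive sequence q : ℕ → ℝ satisfies, for all i ≥ 1: q_i ≤ γ q_{i-1}, and (1-ε) q_{i-1}²/(2 q_i⁺) ≤ q_i ≤ q_{i-1}²/(2 q_i⁺) where q_i⁺ = Σ_{k≥i} q_k < ∞. Then for all i ≥ 1: √((1-ε)(1-γ)/2) ≤ q_i/q_{i-1} ≤ √((1 - √((1-ε)(1-γ)/2))/2). -/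
open scoped ENNReal

/-!
The one-step bound `q i ≤ γ q (i-1)` makes the tail `q_i⁺` at most a geometric series, so
`q_i⁺ ≤ q_i / (1 - γ)`; inserted into the lower inequality this gives
`q_i / q_(i-1) ≥ √c` with `c = (1 - ε)(1 - γ) / 2`. That ratio bound in turn makes the tail
at least a geometric series, `q_i⁺ ≥ q_i / (1 - √c)`, and inserted into the upper inequality
it gives `q_i / q_(i-1) ≤ √((1 - √c) / 2)`.
-/

section GeometricTail

variable {q : ℕ → ℝ} {r : ℝ} {n : ℕ}

theorem tsum_nat_add_le_of_le_mul (hr₀ : 0 ≤ r) (hr₁ : r < 1) (hq : Summable q)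
    (hstep : ∀ i, n ≤ i → q (i + 1) ≤ r * q i) :
    ∑' k, q (n + k) ≤ q n / (1 - r) := by
  have hgeom : ∀ k, q (n + k) ≤ r ^ k * q n := fun k =>
    le_geom (u := fun k => q (n + k)) hr₀ k fun j _ => hstep (n + j) (by omega)
  calc ∑' k, q (n + k) ≤ ∑' k, r ^ k * q n :=
        (hq.comp_injective (add_right_injective n)).tsum_le_tsum hgeom
          ((summable_geometric_of_lt_one hr₀ hr₁).mul_right _)
    _ = q n / (1 - r) := by
        rw [tsum_mul_right, tsum_geometric_of_lt_one hr₀ hr₁, div_eq_inv_mul]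

theorem div_le_tsum_nat_add_of_mul_le (hr₀ : 0 ≤ r) (hr₁ : r < 1) (hq : Summable q)
    (hstep : ∀ i, n ≤ i → r * q i ≤ q (i + 1)) :
    q n / (1 - r) ≤ ∑' k, q (n + k) := by
  have hgeom : ∀ k, r ^ k * q n ≤ q (n + k) := fun k =>
    geom_le (u := fun k => q (n + k)) hr₀ k fun j _ => hstep (n + j) (by omega)
  calc q n / (1 - r) = ∑' k, r ^ k * q n := by
        rw [tsum_mul_right, tsum_geometric_of_lt_one hr₀ hr₁, div_eq_inv_mul]
    _ ≤ ∑' k, q (n + k) :=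
        ((summable_geometric_of_lt_one hr₀ hr₁).mul_right _).tsum_le_tsum hgeom
          (hq.comp_injective (add_right_injective n))

end GeometricTail

section RatioBounds

variable {a b S δ : ℝ}

theorem sqrt_le_div_of_tail_le {α : ℝ} (ha : 0 < a) (hb : 0 ≤ b) (hS : 0 < S) (hδ : 0 < δ)
    (hlow : α * a ^ 2 / (2 * S) ≤ b) (htail : S ≤ b / δ) :
    Real.sqrt (α * δ / 2) ≤ b / a := by
  rw [div_le_iff₀ (by positivity)] at hlow
  rw [le_div_iff₀ hδ] at htail
  rw [Real.sqrt_le_left (by positivity), div_pow, le_div_iff₀ (by positivity)]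
  nlinarith

theorem div_le_sqrt_of_le_tail (ha : 0 < a) (hb : 0 ≤ b) (hS : 0 < S) (hδ : 0 < δ)
    (hupp : b ≤ a ^ 2 / (2 * S)) (htail : b / δ ≤ S) :
    b / a ≤ Real.sqrt (δ / 2) := by
  rw [le_div_iff₀ (by positivity)] at hupp
  rw [div_le_iff₀ hδ] at htail
  rw [Real.le_sqrt (by positivity) (by positivity), div_pow, div_le_iff₀ (by positivity)]
  nlinarith

end RatioBounds

/-- the ratio-pinning lemma for the Horton-Strahler recursion. -/
theorem hs_ratio_pinning (γ ε : ℝ) (hγ : γ ∈ Set.Ioo (0 : ℝ) 1) (hε : ε ∈ Set.Ioo (0 : ℝ) 1)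
    (q : ℕ → ℝ) (hq : ∀ i, 0 < q i) (hsum : Summable q)
    (hγq : ∀ i, 1 ≤ i → q i ≤ γ * q (i - 1))
    (hlow : ∀ i, 1 ≤ i → (1 - ε) * (q (i - 1)) ^ 2 / (2 * ∑' k, q (i + k)) ≤ q i)
    (hupp : ∀ i, 1 ≤ i → q i ≤ (q (i - 1)) ^ 2 / (2 * ∑' k, q (i + k))) :
    ∀ i, 1 ≤ i →
      Real.sqrt ((1 - ε) * (1 - γ) / 2) ≤ q i / q (i - 1) ∧
      q i / q (i - 1) ≤ Real.sqrt ((1 - Real.sqrt ((1 - ε) * (1 - γ) / 2)) / 2) := by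
  obtain ⟨hγ₀, hγ₁⟩ := hγ
  obtain ⟨hε₀, -⟩ := hε
  set c := (1 - ε) * (1 - γ) / 2
  have hc₁ : c < 1 := by
    show (1 - ε) * (1 - γ) / 2 < 1
    nlinarith [mul_pos hε₀ (sub_pos.2 hγ₁)]
  have hsc₁ : Real.sqrt c < 1 := by rw [Real.sqrt_lt' one_pos]; linarith
  have htail_pos : ∀ i, 0 < ∑' k, q (i + k) := fun i =>
    (hsum.comp_injective (add_right_injective i)).tsum_pos (fun k => (hq _).le) 0 (hq _)
  have hratio_low : ∀ i, 1 ≤ i → Real.sqrt c ≤ q i / q (i - 1) := fun i hi =>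
    sqrt_le_div_of_tail_le (hq _) (hq i).le (htail_pos i) (by linarith) (hlow i hi)
      (tsum_nat_add_le_of_le_mul hγ₀.le hγ₁ hsum fun j _ => by
        simpa using hγq (j + 1) (by omega))
  intro i hi
  refine ⟨hratio_low i hi, div_le_sqrt_of_le_tail (hq _) (hq i).le (htail_pos i) (by linarith)
    (hupp i hi) (div_le_tsum_nat_add_of_mul_le (Real.sqrt_nonneg c) hsc₁ hsum fun j _ => ?_)⟩
  have := hratio_low (j + 1) (by omega)
  rwa [Nat.add_sub_cancel, le_div_iff₀ (hq j)] at this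
end
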